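/- arXiv:1803.09880 — 3 statements merged into one kernel-verified Lean document; each statement's English description precedes it below -/
import Mathlib

section
/- Let T_9 be the tournament on vertex set {0,1,...,8} with arcs i → j whenever i - j ≡ 1, 2, 3, or 5 (mod 9). Then T_9 contains no 4-ary spanning tree; consequently h(4) ≥ 10. -/
/-- `beats` is a tournament relation: irreflexive, and between any two distinct
vertices exactly one of the two arcs is present. -/
def IsTournament {V : Type*} (beats : V → V → Prop) : Prop :=
  (∀ v, ¬ beats v v) ∧ ∀ u v : V, u ≠ v → (beats u v ↔ ¬ beats v u)

/-- `IsKAryTreeOn beats k S root parent` says that `parent` describes a rooted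
directed tree on the finite vertex set `S` with root `root`, all of whose arcs
(from a parent to each of its children) are arcs of the tournament `beats`,
in which every non-leaf vertex has exactly `k` children except possibly one
vertex which has at most `k` (hence, if a non-leaf exception, at most `k-1`
beyond the regular ones) children. -/
def IsKAryTreeOn {V : Type*} [DecidableEq V] (beats : V → V → Prop) (k : ℕ)
    (S : Finset V) (root : V) (parent : V → V) : Prop :=
  root ∈ S ∧ (∀ v ∈ S, parent v ∈ S) ∧ parent root = root ∧
  (∀ v ∈ S, v ≠ root → beats (parent v) v) ∧
  (∀ v ∈ S, ∃ n : ℕ, parent^[n] v = root) ∧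
  ∃ e ∈ S, (S.filter (fun w => w ≠ root ∧ parent w = e)).card ≤ k ∧
    ∀ v ∈ S, v ≠ e →
      (S.filter (fun w => w ≠ root ∧ parent w = v)).card = k ∨
      (S.filter (fun w => w ≠ root ∧ parent w = v)).card = 0

/-- The tournament `beats` contains a `k`-ary spanning tree. -/
def HasKArySpanningTree {V : Type*} [Fintype V] [DecidableEq V]
    (beats : V → V → Prop) (k : ℕ) : Prop :=
  ∃ (root : V) (parent : V → V), IsKAryTreeOn beats k Finset.univ root parent

/-- The tournament `T₉` on `{0,…,8}` with `i → j` iff `i - j ≡ 1,2,3,5 (mod 9)`. -/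
def T9 (i j : ZMod 9) : Prop := i - j = 1 ∨ i - j = 2 ∨ i - j = 3 ∨ i - j = 5

open Finset

/-!
Let `beats` have out-degrees at most `k` on `n` vertices. In a `k`-ary spanning tree the children
of `v` lie in its out-neighbourhood and together they are the `n - 1` non-root vertices. When
`k ∣ n - 1` the exceptional vertex is therefore regular too: every vertex has `0` or `k` children,
in the latter case exactly its out-neighbourhood. When moreover `k < n - 1`, some non-root vertex
`v` has `k` children, hence so does its parent `p`, and a common out-neighbour of `p` and `v`
would be a child of both. In `T₉` (`n = 9`, `k = 4`) adjacent vertices have a common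
out-neighbour.
-/

section Counting

variable {V : Type*} [Fintype V] [DecidableEq V]

/-- The root is its own `parent` but not its own child. -/
def children (root : V) (parent : V → V) (v : V) : Finset V :=
  univ.filter fun w => w ≠ root ∧ parent w = v

theorem sum_card_children (root : V) (parent : V → V) :
    ∑ v, #(children root parent v) = Fintype.card V - 1 :=
  calc ∑ v, #(children root parent v) = ∑ v, #((univ.erase root).filter (parent · = v)) :=
        sum_congr rfl fun v _ => by congr 1; ext w; simp [children]
    _ = #(univ.erase root) := (card_eq_sum_card_fiberwise fun _ _ => mem_univ _).symm
    _ = Fintype.card V - 1 := by rw [card_erase_of_mem (mem_univ _), card_univ]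

theorem children_subset_filter {beats : V → V → Prop} [DecidableRel beats] {root : V}
    {parent : V → V} (harc : ∀ v ∈ (univ : Finset V), v ≠ root → beats (parent v) v) (v : V) :
    children root parent v ⊆ univ.filter (beats v) := by
  intro w hw
  obtain ⟨hw_root, rfl⟩ := (mem_filter.1 hw).2
  exact mem_filter.2 ⟨mem_univ w, harc w (mem_univ w) hw_root⟩

end Counting

theorem eq_or_eq_zero_of_dvd_sum {α : Type*} [Fintype α] {g : α → ℕ} {k : ℕ} (e : α)
    (hdvd : k ∣ ∑ v, g v) (hle : ∀ v, g v ≤ k) (hreg : ∀ v, v ≠ e → g v = k ∨ g v = 0) (v : α) :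
    g v = k ∨ g v = 0 := by
  classical
  by_cases hv : v = e
  · subst hv
    have hrest : k ∣ ∑ w ∈ univ.erase v, g w :=
      dvd_sum fun w hw => by
        rcases hreg w (ne_of_mem_erase hw) with h | h <;> simp [h]
    rw [← add_sum_erase _ _ (mem_univ v)] at hdvd
    have hv_dvd : k ∣ g v := (Nat.dvd_add_left hrest).1 hdvd
    rcases (hle v).lt_or_eq with hlt | heq
    · exact Or.inr (Nat.eq_zero_of_dvd_of_lt hv_dvd hlt)
    · exact Or.inl heq
  · exact hreg v hv

theorem not_hasKArySpanningTree_of_exists_common_outNbr {V : Type*} [Fintype V] [DecidableEq V]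
    {beats : V → V → Prop} [DecidableRel beats] {k : ℕ} (hirr : ∀ v, ¬ beats v v)
    (hout : ∀ v, #(univ.filter (beats v)) ≤ k)
    (hcommon : ∀ u v, beats u v → ∃ w, beats u w ∧ beats v w)
    (hdvd : k ∣ Fintype.card V - 1) (hlt : k < Fintype.card V - 1) :
    ¬ HasKArySpanningTree beats k := by
  rintro ⟨root, parent, -, -, -, harc, -, e, -, -, hreg⟩
  have hsub := children_subset_filter harc
  have hle (v : V) : #(children root parent v) ≤ k := (card_le_card (hsub v)).trans (hout v)
  have hfull := eq_or_eq_zero_of_dvd_sum e (sum_card_children root parent ▸ hdvd) hle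
    fun v hv => hreg v (mem_univ v) hv
  have hchildren (v : V) (hv : 0 < #(children root parent v)) :
      children root parent v = univ.filter (beats v) :=
    eq_of_subset_of_card_le (hsub v) ((hout v).trans ((hfull v).resolve_right hv.ne').ge)
  obtain ⟨v, hv_root, hv⟩ : ∃ v, v ≠ root ∧ 0 < #(children root parent v) := by
    by_contra! h
    have hsum := sum_card_children root parent
    rw [sum_eq_single root (fun v _ hv => Nat.le_zero.1 (h v hv)) (by simp)] at hsum
    have := hle root
    omega
  have hpv := harc v (mem_univ v) hv_root
  have hp : 0 < #(children root parent (parent v)) :=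
    card_pos.2 ⟨v, mem_filter.2 ⟨mem_univ v, hv_root, rfl⟩⟩
  obtain ⟨w, hpw, hvw⟩ := hcommon _ _ hpv
  have hw_p : parent w = parent v :=
    (mem_filter.1 ((hchildren _ hp).symm ▸ mem_filter.2 ⟨mem_univ w, hpw⟩)).2.2
  have hw_v : parent w = v :=
    (mem_filter.1 ((hchildren _ hv).symm ▸ mem_filter.2 ⟨mem_univ w, hvw⟩)).2.2
  exact hirr v (by rwa [hw_p.symm.trans hw_v] at hpv)

instance : DecidableRel T9 := fun i j => by unfold T9; infer_instance

theorem T9_isTournament : IsTournament T9 := by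
  unfold IsTournament; decide

theorem not_hasKArySpanningTree_T9 : ¬ HasKArySpanningTree T9 4 :=
  not_hasKArySpanningTree_of_exists_common_outNbr (by decide) (by decide) (by decide)
    (by simp) (by simp)

/-- `T₉` has no 4-ary spanning tree; consequently `h(4) ≥ 10`, i.e. it is not the
case that every tournament of order at least 9 has a 4-ary spanning tree. -/
theorem stmt8 :
    ¬ HasKArySpanningTree T9 4 ∧
    ¬ (∀ (W : Type) [Fintype W] [DecidableEq W], 9 ≤ Fintype.card W →
        ∀ beats : W → W → Prop, IsTournament beats →
          HasKArySpanningTree beats 4) :=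
  ⟨not_hasKArySpanningTree_T9, fun h =>
    not_hasKArySpanningTree_T9 (h (ZMod 9) (ZMod.card 9).ge T9 T9_isTournament)⟩
end

section
/- There exists a tournament T_12 on 12 vertices with no 5-ary spanning tree; consequently h(5) ≥ 13. Explicitly, T_12 has vertex set {0,...,11} and arc set {(0,3),(0,5),(0,9),(0,10),(0,11),(1,0),(1,4),(1,6),(1,8),(1,9),(1,11),(2,0),(2,1),(2,7),(2,8),(2,10),(2,11),(3,1),(3,2),(3,6),(3,9),(3,10),(4,0),(4,2),(4,3),(4,7),(4,9),(5,1),(5,2),(5,3),(5,4),(5,8),(5,11),(6,0),(6,2),(6,4),(6,5),(6,10),(7,0),(7,1),(7,3),(7,5),(7,6),(8,0),(8,3),(8,4),(8,6),(8,7),(9,2),(9,5),(9,6),(9,7),(9,8),(9,11),(10,1),(10,4),(10,5),(10,7),(10,8),(10,9),(11,3),(11,4),(11,6),(11,7),(11,8),(11,10)}. -/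
/-- The arc list of the explicit 12-vertex tournament `T₁₂`. -/
def T12arcs : List (Fin 12 × Fin 12) :=
  [(0,3),(0,5),(0,9),(0,10),(0,11),(1,0),(1,4),(1,6),(1,8),(1,9),(1,11),
   (2,0),(2,1),(2,7),(2,8),(2,10),(2,11),(3,1),(3,2),(3,6),(3,9),(3,10),
   (4,0),(4,2),(4,3),(4,7),(4,9),(5,1),(5,2),(5,3),(5,4),(5,8),(5,11),
   (6,0),(6,2),(6,4),(6,5),(6,10),(7,0),(7,1),(7,3),(7,5),(7,6),
   (8,0),(8,3),(8,4),(8,6),(8,7),(9,2),(9,5),(9,6),(9,7),(9,8),(9,11),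
   (10,1),(10,4),(10,5),(10,7),(10,8),(10,9),
   (11,3),(11,4),(11,6),(11,7),(11,8),(11,10)]

/-- The explicit 12-vertex tournament `T₁₂`. -/
def T12 (i j : Fin 12) : Prop := (i, j) ∈ T12arcs

/-!
In a `k`-ary spanning tree on `n ≥ 2k + 2` vertices the `n - 1` non-root vertices are shared
out as children, `k` to each full vertex and at most `k` to the exceptional one, so at least two
distinct vertices have `k` children each. Children of distinct vertices are distinct
out-neighbours, so those two vertices have at least `2k` out-neighbours together. In `T₁₂`
any two vertices of out-degree at least `5` have at most `9` out-neighbours together.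
-/

open Finset

namespace IsKAryTreeOn

variable {V : Type*} [DecidableEq V] {beats : V → V → Prop} {k : ℕ} {S : Finset V}
  {root : V} {parent : V → V}

def children (S : Finset V) (root : V) (parent : V → V) (v : V) : Finset V :=
  S.filter (fun w => w ≠ root ∧ parent w = v)

theorem sum_card_children (hroot : root ∈ S) (hparent : ∀ v ∈ S, parent v ∈ S) :
    ∑ v ∈ S, #(children S root parent v) = #S - 1 := by
  rw [← card_erase_of_mem hroot, card_eq_sum_card_fiberwise (f := parent) (t := S)
    (fun w hw => hparent w (mem_of_mem_erase hw))]
  refine sum_congr rfl fun v _ => congrArg card ?_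
  ext w
  simp [children, and_left_comm, and_assoc]

theorem children_subset [DecidableRel beats] (h : IsKAryTreeOn beats k S root parent) (v : V) :
    children S root parent v ⊆ S.filter (beats v) := by
  intro w hw
  obtain ⟨hwS, hw_ne, rfl⟩ := by simpa [children] using hw
  exact mem_filter.mpr ⟨hwS, h.2.2.2.1 w hwS hw_ne⟩

theorem disjoint_children {a b : V} (hab : a ≠ b) :
    Disjoint (children S root parent a) (children S root parent b) := by
  refine disjoint_left.mpr fun w hwa hwb => hab ?_
  simp only [children, mem_filter] at hwa hwb
  exact hwa.2.2.symm.trans hwb.2.2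

theorem exists_ne_card_children_eq (h : IsKAryTreeOn beats k S root parent)
    (hS : 2 * k + 2 ≤ #S) :
    ∃ a ∈ S, ∃ b ∈ S, a ≠ b ∧
      #(children S root parent a) = k ∧ #(children S root parent b) = k := by
  obtain ⟨hroot, hparent, -, -, -, e, he, hce, hother⟩ := h
  set A := (S.erase e).filter (fun v => #(children S root parent v) = k)
  have hsplit : #(children S root parent e) + #A * k = #S - 1 := by
    rw [← sum_card_children hroot hparent, ← add_sum_erase S _ he, ← smul_eq_mul,
      ← sum_const, sum_filter]
    congr 1
    refine sum_congr rfl fun v hv => ?_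
    split_ifs with hvk
    · exact hvk.symm
    · exact ((hother v (mem_of_mem_erase hv) (ne_of_mem_erase hv)).resolve_left hvk).symm
  have hA : 1 < #A := by
    by_contra! hA
    have : #A * k ≤ k := by simpa using Nat.mul_le_mul_right k hA
    change #(children S root parent e) ≤ k at hce
    omega
  obtain ⟨a, ha, b, hb, hab⟩ := one_lt_card.mp hA
  simp only [A, mem_filter] at ha hb
  exact ⟨a, mem_of_mem_erase ha.1, b, mem_of_mem_erase hb.1, hab, ha.2, hb.2⟩

end IsKAryTreeOn

open IsKAryTreeOn in
theorem not_hasKArySpanningTree_of_card_union_lt {V : Type*} [Fintype V] [DecidableEq V]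
    {beats : V → V → Prop} [DecidableRel beats] {k : ℕ} (hV : 2 * k + 2 ≤ Fintype.card V)
    (hsmall : ∀ a b, a ≠ b → k ≤ #(univ.filter (beats a)) → k ≤ #(univ.filter (beats b)) →
      #(univ.filter (beats a) ∪ univ.filter (beats b)) < 2 * k) :
    ¬ HasKArySpanningTree beats k := by
  rintro ⟨root, parent, h⟩
  obtain ⟨a, -, b, -, hab, ha, hb⟩ := h.exists_ne_card_children_eq hV
  have hchildren : 2 * k ≤ #(univ.filter (beats a) ∪ univ.filter (beats b)) :=
    calc 2 * k = #(children univ root parent a ∪ children univ root parent b) := by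
          rw [card_union_of_disjoint (disjoint_children hab), ha, hb, two_mul]
      _ ≤ _ := card_le_card (union_subset_union (h.children_subset a) (h.children_subset b))
  exact (hsmall a b hab (ha ▸ card_le_card (h.children_subset a))
    (hb ▸ card_le_card (h.children_subset b))).not_ge hchildren

instance : DecidableRel T12 := fun i j => inferInstanceAs (Decidable ((i, j) ∈ T12arcs))

theorem isTournament_T12 : IsTournament T12 := ⟨by decide, by decide⟩

theorem T12_card_outNbhd_union_lt (a b : Fin 12) (hab : a ≠ b)
    (ha : 5 ≤ #(univ.filter (T12 a))) (hb : 5 ≤ #(univ.filter (T12 b))) :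
    #(univ.filter (T12 a) ∪ univ.filter (T12 b)) < 2 * 5 := by
  revert a b
  decide

/-- `T₁₂` is a tournament with no 5-ary spanning tree; consequently `h(5) ≥ 13`,
i.e. it is not the case that every tournament of order at least 12 has a 5-ary
spanning tree. -/
theorem stmt15 :
    IsTournament T12 ∧ ¬ HasKArySpanningTree T12 5 ∧
    ¬ (∀ (W : Type) [Fintype W] [DecidableEq W], 12 ≤ Fintype.card W →
        ∀ beats : W → W → Prop, IsTournament beats →
          HasKArySpanningTree beats 5) := by
  have hT12 : ¬ HasKArySpanningTree T12 5 :=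
    not_hasKArySpanningTree_of_card_union_lt (by simp) T12_card_outNbhd_union_lt
  exact ⟨isTournament_T12, hT12, fun h => hT12 (h (Fin 12) (by simp) T12 isTournament_T12)⟩
end

section
/- Suppose every tournament on n' vertices contains a 4-ary spanning tree for all 10 ≤ n' < n, and n ≥ 14. Then every tournament on n vertices contains a 4-ary spanning tree. (Induction step: pick a vertex v of out-degree at least 4 with out-neighbors a,b,c,d; remove {v,a,b,c}, take a 4-ary spanning tree of the remaining tournament, and attach the 4-star rooted at v.) -/
/-! Some vertex `v` beats at least `(n - 1) / 2 ≥ 4` others. Remove `v` together with three of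
its out-neighbours `B`; the remaining `n - 4 ≥ 10` vertices carry a 4-ary tree by hypothesis,
and they contain a fourth out-neighbour `d` of `v`. Walking from `d` towards the root we meet a
vertex `u` beaten by `v` that is the root or whose parent beats `v`. Putting `v` in the place of
`u` and hanging `u` and `B` below `v` keeps every child count and gives `v` exactly four
children. -/

open Finset Function

section Tournament

variable {V : Type*} {beats : V → V → Prop}

theorem IsTournament.comap {W : Type*} (ht : IsTournament beats) {f : W → V}
    (hf : Injective f) : IsTournament fun a b => beats (f a) (f b) :=
  ⟨fun a => ht.1 (f a), fun a b hab => ht.2 (f a) (f b) (hf.ne hab)⟩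

theorem IsTournament.ne_of_beats (ht : IsTournament beats) {u v : V} (h : beats u v) :
    u ≠ v := by
  rintro rfl
  exact ht.1 u h

theorem IsTournament.beats_of_not_beats (ht : IsTournament beats) {u v : V} (huv : u ≠ v)
    (h : ¬ beats v u) : beats u v :=
  (ht.2 u v huv).2 h

theorem IsTournament.card_filter_add_card_filter [Fintype V] [DecidableEq V] [DecidableRel beats]
    (ht : IsTournament beats) (v : V) :
    #{w | beats v w} + #{w | beats w v} = Fintype.card V - 1 := by
  rw [← card_univ, ← card_erase_of_mem (mem_univ v),
    ← (univ.erase v).card_filter_add_card_filter_not (beats v)]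
  congr 2 <;> ext w <;> simp only [mem_filter, mem_erase, mem_univ, true_and, and_true]
  · exact ⟨fun h => ⟨(ht.ne_of_beats h).symm, h⟩, And.right⟩
  · exact ⟨fun h => ⟨ht.ne_of_beats h, (ht.2 w v (ht.ne_of_beats h)).1 h⟩,
      fun h => ht.beats_of_not_beats h.1 h.2⟩

/-- Out- and in-degrees have the same sum, so the out-degrees average `(|V| - 1) / 2`. -/
theorem IsTournament.exists_le_two_mul_card_filter [Fintype V] [DecidableEq V]
    [DecidableRel beats] [Nonempty V] (ht : IsTournament beats) :
    ∃ v, Fintype.card V - 1 ≤ 2 * #{w | beats v w} := by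
  have hsum : ∑ v, #{w | beats v w} = ∑ v, #{w | beats w v} := by
    simp only [card_filter]
    exact sum_comm
  have htotal : ∑ _v : V, (Fintype.card V - 1) = ∑ v, 2 * #{w | beats v w} := by
    rw [← mul_sum, two_mul]
    nth_rewrite 2 [hsum]
    rw [← sum_add_distrib]
    exact sum_congr rfl fun v _ => (ht.card_filter_add_card_filter v).symm
  obtain ⟨v, -, hv⟩ := exists_le_of_sum_le univ_nonempty htotal.le
  exact ⟨v, hv⟩

end Tournament

section Iterate

variable {α : Type*} {f g : α → α} {S : Set α} {r : α}

theorem exists_iterate_eq_trans {x y z : α} :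
    (∃ m, f^[m] x = y) → (∃ n, f^[n] y = z) → ∃ n, f^[n] x = z
  | ⟨m, hm⟩, ⟨n, hn⟩ => ⟨n + m, by rw [iterate_add_apply, hm, hn]⟩

theorem exists_iterate_eq_of_forall_exists_iterate_eq_apply (hf : Set.MapsTo f S S)
    (hg : ∀ x ∈ S, x ≠ r → ∃ t, g^[t] x = f x) :
    ∀ m, ∀ x ∈ S, f^[m] x = r → ∃ t, g^[t] x = r := by
  intro m
  induction m with
  | zero => exact fun x _ hx => ⟨0, hx⟩
  | succ m ih =>
    intro x hx hm
    by_cases hxr : x = r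
    · exact ⟨0, hxr⟩
    exact exists_iterate_eq_trans (hg x hx hxr)
      (ih (f x) (hf hx) (by rwa [iterate_succ_apply] at hm))

theorem exists_mem_imp_not_apply_of_iterate_eq (hf : Set.MapsTo f S S) {P : α → Prop} :
    ∀ m, ∀ x ∈ S, P x → f^[m] x = r → ∃ u ∈ S, P u ∧ (u ≠ r → ¬ P (f u)) := by
  intro m
  induction m with
  | zero => exact fun x hx hPx hxr => ⟨x, hx, hPx, fun hne => (hne hxr).elim⟩
  | succ m ih =>
    intro x hx hPx hm
    by_cases hstep : x ≠ r ∧ P (f x)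
    · exact ih (f x) (hf hx) hstep.2 (by rwa [iterate_succ_apply] at hm)
    · exact ⟨x, hx, hPx, fun hxr hP => hstep ⟨hxr, hP⟩⟩

end Iterate

section Tree

variable {V : Type*} [DecidableEq V] {beats : V → V → Prop} {k : ℕ}

def treeChildren (S : Finset V) (root : V) (parent : V → V) (x : V) : Finset V :=
  S.filter fun w => w ≠ root ∧ parent w = x

theorem IsKAryTreeOn.of_card_treeChildren_eq {S T : Finset V} {r r' : V} {p p' : V → V}
    (hT : IsKAryTreeOn beats k S r p) (hST : S ⊆ T) (hr' : r' ∈ T)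
    (hmaps : ∀ x ∈ T, p' x ∈ T) (hroot : p' r' = r')
    (harcs : ∀ x ∈ T, x ≠ r' → beats (p' x) x) (hreach : ∀ x ∈ T, ∃ n, p'^[n] x = r')
    (hold : ∀ x ∈ S, #(treeChildren T r' p' x) = #(treeChildren S r p x))
    (hnew : ∀ x ∈ T, x ∉ S →
      #(treeChildren T r' p' x) = k ∨ #(treeChildren T r' p' x) = 0) :
    IsKAryTreeOn beats k T r' p' := by
  obtain ⟨-, -, -, -, -, e, he, hek, hcount⟩ := hT
  refine ⟨hr', hmaps, hroot, harcs, hreach, e, hST he, (hold e he).trans_le hek,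
    fun x hx hxe => ?_⟩
  by_cases hxS : x ∈ S
  · change #(treeChildren T r' p' x) = k ∨ #(treeChildren T r' p' x) = 0
    rw [hold x hxS]
    exact hcount x hxS hxe
  · exact hnew x hx hxS

theorem HasKArySpanningTree.exists_isKAryTreeOn {S : Finset V}
    (h : HasKArySpanningTree (fun a b : S => beats a b) k) :
    ∃ r p, IsKAryTreeOn beats k S r p := by
  obtain ⟨r, p, -, -, hroot, harcs, hreach, e, -, hek, hcount⟩ := h
  let p' : V → V := fun x => if hx : x ∈ S then p ⟨x, hx⟩ else x
  have hsemi : Semiconj Subtype.val p p' := fun x => by simp [p']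
  have hchildren (x : S) :
      treeChildren S r p' x = (treeChildren univ r p x).map (Embedding.subtype _) := by
    ext w
    simp only [treeChildren, mem_map, mem_filter, mem_univ, true_and, Embedding.coe_subtype,
      Subtype.exists, exists_and_right, exists_eq_right]
    constructor
    · rintro ⟨hw, hwr, hwx⟩
      exact ⟨hw, fun h => hwr (congrArg Subtype.val h), Subtype.ext ((hsemi ⟨w, hw⟩).trans hwx)⟩
    · rintro ⟨hw, hwr, hwx⟩
      exact ⟨hw, fun h => hwr (Subtype.ext h), (hsemi ⟨w, hw⟩).symm.trans (congrArg _ hwx)⟩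
  have hcard (x : S) : #(treeChildren S r p' x) = #(treeChildren univ r p x) := by
    rw [hchildren, card_map]
  refine ⟨r, p', r.2, fun x hx => ?_, (hsemi r).symm.trans (congrArg _ hroot),
    fun x hx hxr => ?_, fun x hx => ?_, e, e.2, (hcard e).trans_le hek, fun x hx hxe => ?_⟩
  · rw [← hsemi ⟨x, hx⟩]
    exact Subtype.coe_prop _
  · rw [← hsemi ⟨x, hx⟩]
    exact harcs ⟨x, hx⟩ (mem_univ _) fun h => hxr (congrArg Subtype.val h)
  · obtain ⟨n, hn⟩ := hreach ⟨x, hx⟩ (mem_univ _)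
    exact ⟨n, by rw [← hsemi.iterate_right n ⟨x, hx⟩, hn]⟩
  · change #(treeChildren S r p' x) = k ∨ #(treeChildren S r p' x) = 0
    rw [hcard ⟨x, hx⟩]
    exact hcount ⟨x, hx⟩ (mem_univ _) fun h => hxe (congrArg Subtype.val h)

end Tree

section Graft

variable {V : Type*} [DecidableEq V] {beats : V → V → Prop} {k : ℕ} {S B : Finset V}
  {p : V → V} {r v u x : V}

/-- `v` takes the place of `u` in the tree, becoming the new root `swap u v r` if `u` was the
root, and `u` and the vertices of `B` become the children of `v`. -/
def graft (p : V → V) (r v u : V) (B : Finset V) : V → V := fun x =>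
  if x = v then (if u = r then v else p u) else if x = u ∨ x ∈ B then v else p x

theorem graft_apply_of_mem (hvS : v ∉ S) (hBS : Disjoint B S) (hx : x ∈ S) (hxu : x ≠ u) :
    graft p r v u B x = p x := by
  have hxv : x ≠ v := ne_of_mem_of_not_mem hx hvS
  simp [graft, hxv, hxu, disjoint_right.mp hBS hx]

theorem graft_mem (hpS : ∀ x ∈ S, p x ∈ S) (hu : u ∈ S) (hx : x ∈ insert v B ∪ S) :
    graft p r v u B x ∈ insert v S := by
  unfold graft
  split_ifs with hxv hur hstar
  · exact mem_insert_self v S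
  · exact mem_insert_of_mem (hpS u hu)
  · exact mem_insert_self v S
  · simp only [mem_union, mem_insert, not_or] at hx hstar
    exact mem_insert_of_mem (hpS x (hx.resolve_left (not_or.mpr ⟨hxv, hstar.2⟩)))

theorem treeChildren_graft_of_mem (hvS : v ∉ S) (hBS : Disjoint B S) (hu : u ∈ S) (hr : r ∈ S)
    (hx : x ∈ S) :
    treeChildren (insert v B ∪ S) (Equiv.swap u v r) (graft p r v u B) x =
      (treeChildren S r p x).map (Equiv.swap u v).toEmbedding := by
  have hrv : r ≠ v := ne_of_mem_of_not_mem hr hvS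
  have huv : u ≠ v := ne_of_mem_of_not_mem hu hvS
  have hxv : x ≠ v := ne_of_mem_of_not_mem hx hvS
  ext w
  rw [mem_map_equiv, Equiv.symm_swap]
  simp only [treeChildren, mem_filter, mem_union, mem_insert]
  by_cases hwv : w = v
  · subst hwv
    rcases eq_or_ne u r with rfl | hur
    · simp
    · simp [graft, Equiv.swap_apply_of_ne_of_ne hur.symm hrv, hu, hur, hrv.symm]
  by_cases hwu : w = u
  · subst hwu
    simp [graft, huv, hvS, hxv.symm]
  rw [Equiv.swap_apply_of_ne_of_ne hwu hwv]
  by_cases hwB : w ∈ B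
  · simp [graft, hwv, hwB, hxv.symm, disjoint_left.mp hBS hwB]
  rcases eq_or_ne u r with rfl | hur
  · simp [graft, hwv, hwB, hwu]
  · simp [graft, hwv, hwB, hwu, Equiv.swap_apply_of_ne_of_ne hur.symm hrv]

theorem treeChildren_graft_self (hpS : ∀ x ∈ S, p x ∈ S) (hvS : v ∉ S) (hBS : Disjoint B S)
    (hvB : v ∉ B) (hu : u ∈ S) (hr : r ∈ S) :
    treeChildren (insert v B ∪ S) (Equiv.swap u v r) (graft p r v u B) v = insert u B := by
  have hrv : r ≠ v := ne_of_mem_of_not_mem hr hvS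
  have huv : u ≠ v := ne_of_mem_of_not_mem hu hvS
  ext w
  simp only [treeChildren, mem_filter, mem_union, mem_insert]
  by_cases hwv : w = v
  · subst hwv
    rcases eq_or_ne u r with rfl | hur
    · simp [huv.symm, hvB]
    · simp [graft, Equiv.swap_apply_of_ne_of_ne hur.symm hrv, hur, huv.symm, hvB,
        ne_of_mem_of_not_mem (hpS u hu) hvS]
  by_cases hwB : w ∈ B
  · have hwr : w ≠ r := (ne_of_mem_of_not_mem hr (disjoint_left.mp hBS hwB)).symm
    rcases eq_or_ne u r with rfl | hur
    · simp [graft, hwv, hwB]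
    · simp [graft, hwv, hwB, Equiv.swap_apply_of_ne_of_ne hur.symm hrv, hwr]
  by_cases hwu : w = u
  · subst hwu
    rcases eq_or_ne w r with rfl | hur
    · simp [graft, huv, hu]
    · simp [graft, huv, hu, Equiv.swap_apply_of_ne_of_ne hur.symm hrv, hur]
  · simp only [hwv, hwB, hwu, false_or, or_false, iff_false, not_and]
    intro hwS _
    rw [graft_apply_of_mem hvS hBS hwS hwu]
    exact ne_of_mem_of_not_mem (hpS w hwS) hvS

theorem treeChildren_graft_eq_empty (hpS : ∀ x ∈ S, p x ∈ S) (hu : u ∈ S)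
    (hx : x ∉ insert v S) (r' : V) :
    treeChildren (insert v B ∪ S) r' (graft p r v u B) x = ∅ :=
  filter_eq_empty_iff.mpr fun _ hw hw' => hx (hw'.2 ▸ graft_mem hpS hu hw)

theorem IsKAryTreeOn.exists_iterate_graft_eq (hT : IsKAryTreeOn beats k S r p) (hvS : v ∉ S) (hBS : Disjoint B S) (hu : u ∈ S)
    (hx : x ∈ insert v B ∪ S) : ∃ n, (graft p r v u B)^[n] x = Equiv.swap u v r := by
  obtain ⟨hr, hpS, hpr, -, hreach, -⟩ := hT
  have hrv : r ≠ v := ne_of_mem_of_not_mem hr hvS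
  have huv : u ≠ v := ne_of_mem_of_not_mem hu hvS
  have hS : ∀ y ∈ S, ∃ n, (graft p r v u B)^[n] y = r := by
    refine fun y hy => exists_iterate_eq_of_forall_exists_iterate_eq_apply hpS
      (fun z hz hzr => ?_) _ y hy (hreach y hy).choose_spec
    by_cases hzu : z = u
    · subst hzu
      exact ⟨2, by simp [graft, huv, hzr]⟩
    · exact ⟨1, graft_apply_of_mem hvS hBS hz hzu⟩
  have hr' : ∃ n, (graft p r v u B)^[n] r = Equiv.swap u v r := by
    rcases eq_or_ne u r with rfl | hur
    · exact ⟨1, by simp [graft, huv]⟩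
    · exact ⟨0, (Equiv.swap_apply_of_ne_of_ne hur.symm hrv).symm⟩
  have hv : ∃ n, (graft p r v u B)^[n] v = Equiv.swap u v r := by
    rcases eq_or_ne u r with rfl | hur
    · exact ⟨0, by simp⟩
    · exact exists_iterate_eq_trans ⟨1, by simp [graft, hur]⟩
        (exists_iterate_eq_trans (hS (p u) (hpS u hu)) hr')
  simp only [mem_union, mem_insert] at hx
  rcases hx with (rfl | hxB) | hxS
  · exact hv
  · by_cases hxv : x = v
    · exact hxv ▸ hv
    · exact exists_iterate_eq_trans ⟨1, by simp [graft, hxv, hxB]⟩ hv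
  · exact exists_iterate_eq_trans (hS x hxS) hr'

theorem IsKAryTreeOn.isKAryTreeOn_graft (hT : IsKAryTreeOn beats k S r p) (hvS : v ∉ S)
    (hBS : Disjoint B S) (hvB : v ∉ B) (hBk : #B + 1 = k) (hvB' : ∀ b ∈ B, beats v b)
    (hu : u ∈ S) (hvu : beats v u) (hpu : u ≠ r → beats (p u) v) :
    IsKAryTreeOn beats k (insert v B ∪ S) (Equiv.swap u v r) (graft p r v u B) := by
  have ⟨hr, hpS, hpr, harcs, _⟩ := hT
  have hrv : r ≠ v := ne_of_mem_of_not_mem hr hvS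
  have huv : u ≠ v := ne_of_mem_of_not_mem hu hvS
  have hsub : insert v S ⊆ insert v B ∪ S := by
    intro x
    simp only [mem_insert, mem_union]
    tauto
  refine hT.of_card_treeChildren_eq subset_union_right (hsub ?_)
    (fun x hx => hsub (graft_mem hpS hu hx)) ?_ (fun x hx hxr => ?_)
    (fun x hx => hT.exists_iterate_graft_eq hvS hBS hu hx) (fun x hx => ?_) (fun x hx hxnS => ?_)
  · rcases eq_or_ne u r with rfl | hur
    · simp
    · simp [Equiv.swap_apply_of_ne_of_ne hur.symm hrv, hr]
  · rcases eq_or_ne u r with rfl | hur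
    · simp [graft]
    · rw [Equiv.swap_apply_of_ne_of_ne hur.symm hrv, graft_apply_of_mem hvS hBS hr hur.symm, hpr]
  · simp only [mem_union, mem_insert] at hx
    rcases hx with (rfl | hxB) | hxS
    · rcases eq_or_ne u r with rfl | hur
      · simp at hxr
      · simpa [graft, hur] using hpu hur
    · simpa [graft, ne_of_mem_of_not_mem hxB hvB, hxB] using hvB' x hxB
    · by_cases hxu : x = u
      · subst hxu
        simpa [graft, huv] using hvu
      · have hxr' : x ≠ r := by
          rcases eq_or_ne u r with rfl | hur
          · exact hxu
          · rwa [Equiv.swap_apply_of_ne_of_ne hur.symm hrv] at hxr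
        rw [graft_apply_of_mem hvS hBS hxS hxu]
        exact harcs x hxS hxr'
  · rw [treeChildren_graft_of_mem hvS hBS hu hr hx, card_map]
  · simp only [mem_union, mem_insert] at hx
    rcases hx with (rfl | hxB) | hxS
    · left
      rw [treeChildren_graft_self hpS hvS hBS hvB hu hr, card_insert_of_notMem
        (disjoint_right.mp hBS hu), hBk]
    · right
      rw [treeChildren_graft_eq_empty hpS hu, card_empty]
      simp [ne_of_mem_of_not_mem hxB hvB, disjoint_left.mp hBS hxB]
    · exact absurd hxS hxnS

theorem IsKAryTreeOn.exists_isKAryTreeOn_insert_union (ht : IsTournament beats)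
    (hT : IsKAryTreeOn beats k S r p) (hvS : v ∉ S) (hBS : Disjoint B S) (hBk : #B + 1 = k)
    (hvB : ∀ b ∈ B, beats v b) {d : V} (hd : d ∈ S) (hvd : beats v d) :
    ∃ r' p', IsKAryTreeOn beats k (insert v B ∪ S) r' p' := by
  have ⟨_, hpS, _, _, hreach, _⟩ := hT
  obtain ⟨u, hu, hvu, hpu⟩ := exists_mem_imp_not_apply_of_iterate_eq hpS _ d hd hvd
    (hreach d hd).choose_spec
  exact ⟨_, _, hT.isKAryTreeOn_graft hvS hBS (fun h => ht.1 v (hvB v h)) hBk hvB hu hvu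
    fun hur => ht.beats_of_not_beats (ne_of_mem_of_not_mem (hpS u hu) hvS) (hpu hur)⟩

end Graft

/-- Induction step: if every tournament on `n'` vertices with `10 ≤ n' < n` has
a 4-ary spanning tree and `n ≥ 14`, then every tournament on `n` vertices has a
4-ary spanning tree. -/
theorem stmt17 (n : ℕ) (hn : 14 ≤ n)
    (IH : ∀ (W : Type) [Fintype W] [DecidableEq W],
      10 ≤ Fintype.card W → Fintype.card W < n →
      ∀ beats : W → W → Prop, IsTournament beats →
        HasKArySpanningTree beats 4) :
    ∀ (W : Type) [Fintype W] [DecidableEq W], Fintype.card W = n →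
      ∀ beats : W → W → Prop, IsTournament beats →
        HasKArySpanningTree beats 4 := by
  intro W _ _ hW beats ht
  classical
  have : Nonempty W := Fintype.card_pos_iff.mp (by omega)
  obtain ⟨v, hv⟩ := ht.exists_le_two_mul_card_filter
  obtain ⟨B₄, hB₄, hB₄card⟩ := exists_subset_card_eq (s := {w | beats v w}) (n := 4) (by omega)
  obtain ⟨d, hd⟩ := card_pos.mp (hB₄card ▸ four_pos)
  have hvB₄ : ∀ b ∈ B₄, beats v b := fun b hb => (mem_filter.mp (hB₄ hb)).2
  set B := B₄.erase d
  set S := (insert v B)ᶜ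
  have hvB : v ∉ B := fun h => ht.1 v (hvB₄ v (mem_of_mem_erase h))
  have hS : Fintype.card S = n - 4 := by
    rw [Fintype.card_coe, card_compl, card_insert_of_notMem hvB, card_erase_of_mem hd, hB₄card,
      hW]
  have hdS : d ∈ S := by
    simp [S, B, (ht.ne_of_beats (hvB₄ d hd)).symm]
  obtain ⟨r, p, hT⟩ := (IH S (by omega) (by omega) _
    (ht.comap Subtype.val_injective)).exists_isKAryTreeOn
  obtain ⟨r', p', hT'⟩ := hT.exists_isKAryTreeOn_insert_union ht
    (notMem_compl.mpr (mem_insert_self _ _)) (disjoint_compl_right.mono_left (subset_insert v B))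
    (by rw [card_erase_of_mem hd, hB₄card]) (fun b hb => hvB₄ b (mem_of_mem_erase hb)) hdS
    (hvB₄ d hd)
  rw [show insert v B ∪ S = univ from union_compl _] at hT'
  exact ⟨r', p', hT'⟩
end
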